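/- Let L be a nonspecial line bundle on a smooth curve X of genus g ≥ 2 with deg L ≥ 3g - 2. Then L admits a trivial presentation, i.e., there exists an effective divisor E > 0 with L ≅ K_X(E), and this presentation is minimal. -/
import Mathlib


/-!
An abstract framework for divisors, line bundles (as divisor classes),
cohomology dimensions and linear equivalence on a smooth projective curve
over an algebraically closed field of characteristic zero.
-/

noncomputable section

structure AbstractCurve where
  Point : Type
  g : ℕ
  h0 : (Point →₀ ℤ) → ℕ
  K : Point →₀ ℤ
  linEquiv : (Point →₀ ℤ) → (Point →₀ ℤ) → Prop
  linEquiv_refl : ∀ D, linEquiv D D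
  linEquiv_symm : ∀ {D E}, linEquiv D E → linEquiv E D
  linEquiv_trans : ∀ {D E F}, linEquiv D E → linEquiv E F → linEquiv D F
  linEquiv_add : ∀ {D E} (F), linEquiv D E → linEquiv (D + F) (E + F)
  h0_congr : ∀ {D E}, linEquiv D E → h0 D = h0 E
  h0_zero : h0 0 = 1
  h0_neg : ∀ D, (D.sum fun _ n => n) < 0 → h0 D = 0
  riemannRoch : ∀ D, (h0 D : ℤ) - (h0 (K - D) : ℤ) = (D.sum fun _ n => n) + 1 - (g : ℤ)
  exists_effective : ∀ D, 1 ≤ h0 D → ∃ E, (∀ p, 0 ≤ E p) ∧ linEquiv D E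

namespace AbstractCurve

variable (C : AbstractCurve)

/-- The degree of a divisor. -/
def deg (D : C.Point →₀ ℤ) : ℤ := D.sum fun _ n => n

/-- A divisor is effective. -/
def Eff (D : C.Point →₀ ℤ) : Prop := ∀ p, 0 ≤ D p

/-- The greatest common divisor (pointwise minimum) of two divisors. -/
def gcdD (D E : C.Point →₀ ℤ) : C.Point →₀ ℤ :=
  Finsupp.zipWith min (min_self 0) D E

/-- The divisor attached to a single point. -/
def pt (P : C.Point) : C.Point →₀ ℤ := Finsupp.single P 1

/-- `h^1` via Serre duality. -/
def h1 (L : C.Point →₀ ℤ) : ℕ := C.h0 (C.K - L)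

/-- A line bundle (divisor class) is nonspecial if `h^1 = 0`. -/
def Nonspecial (L : C.Point →₀ ℤ) : Prop := C.h1 L = 0

/-- `L ≅ K_X(-D+E)` with `D ≥ 0`, `E > 0`, `gcd(D,E) = 0`, `h^0(O(D)) = 1`
is a presentation of the nonspecial line bundle `L`. -/
def IsPresentation (L D E : C.Point →₀ ℤ) : Prop :=
  C.Eff D ∧ C.Eff E ∧ E ≠ 0 ∧ C.gcdD D E = 0 ∧ C.h0 D = 1 ∧
    C.linEquiv L (C.K - D + E)

/-- A presentation is minimal if `deg E` is minimal among all presentations. -/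
def IsMinimalPresentation (L D E : C.Point →₀ ℤ) : Prop :=
  C.IsPresentation L D E ∧
    ∀ D' E', C.IsPresentation L D' E' → C.deg E ≤ C.deg E'

/-- The gonality: the least degree of a moving (pencil-carrying) divisor. -/
def gonality : ℕ :=
  sInf {n : ℕ | ∃ D, C.Eff D ∧ C.deg D = (n : ℤ) ∧ 2 ≤ C.h0 D}

/-- Very ampleness: any two (possibly equal) points impose independent conditions. -/
def VeryAmple (L : C.Point →₀ ℤ) : Prop :=
  ∀ P Q : C.Point, (C.h0 L : ℤ) - (C.h0 (L - C.pt P - C.pt Q) : ℤ) = 2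

/-- Global generatedness: every point imposes one condition. -/
def GloballyGenerated (L : C.Point →₀ ℤ) : Prop :=
  ∀ P : C.Point, (C.h0 (L - C.pt P) : ℤ) = (C.h0 L : ℤ) - 1

/-- The embedded curve has no `m`-secant `(m-2)`-planes for all `m ≤ k`:
every effective divisor of degree at most `k` spans a plane of dimension `deg - 1`. -/
def SecantFree (L : C.Point →₀ ℤ) (k : ℕ) : Prop :=
  ∀ F, C.Eff F → C.deg F ≤ (k : ℤ) →
    (C.h0 L : ℤ) - (C.h0 (L - F) : ℤ) = C.deg F

/-- The Clifford index of a line bundle. -/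
def CliffD (M : C.Point →₀ ℤ) : ℤ := C.deg M - 2 * ((C.h0 M : ℤ) - 1)

/-- The Clifford index of the curve. -/
def CliffordIndex : ℤ :=
  sInf {c : ℤ | ∃ M, 2 ≤ C.h0 M ∧ 2 ≤ C.h1 M ∧ c = C.CliffD M}

end AbstractCurve

/-- An `n`-fold covering of smooth curves, recorded through the pullback
map on divisors. -/
structure Covering (X Y : AbstractCurve) where
  n : ℕ
  n_pos : 0 < n
  pull : (Y.Point →₀ ℤ) →+ (X.Point →₀ ℤ)
  deg_pull : ∀ E, X.deg (pull E) = (n : ℤ) * Y.deg E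
  eff_pull : ∀ E, Y.Eff E → X.Eff (pull E)
  lin_pull : ∀ {E F}, Y.linEquiv E F → X.linEquiv (pull E) (pull F)
  h0_pull : ∀ E, Y.h0 E ≤ X.h0 (pull E)

namespace Covering

/-- A covering is simple if it does not factor through a nontrivial
intermediate covering. -/
def Simple {X Y : AbstractCurve} (φ : Covering X Y) : Prop :=
  ¬ ∃ (Z : AbstractCurve) (ψ : Covering X Z) (χ : Covering Z Y),
      2 ≤ ψ.n ∧ 2 ≤ χ.n ∧ ∀ E, φ.pull E = ψ.pull (χ.pull E)

/-- A line bundle on `X` is composed with the covering `φ` if it is a pullback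
with the same space of global sections. -/
def ComposedWith {X Y : AbstractCurve} (φ : Covering X Y) (M : X.Point →₀ ℤ) : Prop :=
  ∃ N : Y.Point →₀ ℤ, X.linEquiv M (φ.pull N) ∧ X.h0 M = Y.h0 N

end Covering

/-- A smooth plane curve of degree `d`, with hyperplane (line) class `H`. -/
structure PlaneCurve extends AbstractCurve where
  d : ℕ
  H : Point →₀ ℤ
  eff_H : ∀ p, 0 ≤ H p
  deg_H : (H.sum fun _ n => n) = (d : ℤ)
  h0_H : h0 H = 3
  H_veryAmple : ∀ P Q : Point,
    (h0 H : ℤ) - (h0 (H - Finsupp.single P 1 - Finsupp.single Q 1) : ℤ) = 2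
  genus_eq : 2 * g = (d - 1) * (d - 2)
  canonical_eq : linEquiv K (((d : ℤ) - 3) • H)


namespace AbstractCurve

variable (C : AbstractCurve)

lemma deg_add' (D E : C.Point →₀ ℤ) : C.deg (D + E) = C.deg D + C.deg E := by
  exact Finsupp.sum_add_index' (fun _ => rfl) (fun _ _ _ => rfl)

lemma deg_zero' : C.deg 0 = 0 := by simp [deg]

lemma deg_neg' (D : C.Point →₀ ℤ) : C.deg (-D) = -C.deg D := by
  have h := C.deg_add' D (-D)
  simp [C.deg_zero'] at h
  linarith

lemma deg_sub' (D E : C.Point →₀ ℤ) : C.deg (D - E) = C.deg D - C.deg E := by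
  rw [sub_eq_add_neg, C.deg_add', C.deg_neg']; ring

lemma eff_deg_nonneg {D : C.Point →₀ ℤ} (h : C.Eff D) : 0 ≤ C.deg D := by
  exact Finset.sum_nonneg fun p _ => h p

lemma linEquiv_deg {D E : C.Point →₀ ℤ} (h : C.linEquiv D E) : C.deg D = C.deg E := by
  have h1 : C.linEquiv (D + (C.K - D - E)) (E + (C.K - D - E)) := C.linEquiv_add _ h
  have e1 : D + (C.K - D - E) = C.K - E := by abel
  have e2 : E + (C.K - D - E) = C.K - D := by abel
  rw [e1, e2] at h1
  have hrrD := C.riemannRoch D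
  have hrrE := C.riemannRoch E
  have h2 : C.h0 D = C.h0 E := C.h0_congr h
  have h3 : C.h0 (C.K - E) = C.h0 (C.K - D) := C.h0_congr h1
  change _ = C.deg D + 1 - _ at hrrD
  change _ = C.deg E + 1 - _ at hrrE
  rw [h2, ← h3] at hrrD
  linarith

lemma deg_K : C.deg C.K = 2 * (C.g : ℤ) - 2 := by
  have h0 := C.riemannRoch 0
  have hK := C.riemannRoch C.K
  simp only [C.h0_zero] at h0 hK
  have e0 : ((0 : C.Point →₀ ℤ).sum fun _ n => n) = C.deg (0 : C.Point →₀ ℤ) := rfl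
  rw [e0, C.deg_zero'] at h0
  have e1 : C.K - 0 = C.K := by abel
  have e2 : C.K - C.K = 0 := by abel
  rw [e1] at h0
  rw [e2, C.h0_zero] at hK
  change _ = C.deg C.K + 1 - _ at hK
  linarith

end AbstractCurve

/-- A nonspecial line bundle of degree `≥ 3g - 2` admits a trivial
presentation `L ≅ K_X(E)` (i.e. with `D = 0`), which is minimal. -/
theorem stmt6 (C : AbstractCurve) (hg : 2 ≤ C.g) (L : C.Point →₀ ℤ)
    (hns : C.Nonspecial L) (hdegL : 3 * (C.g : ℤ) - 2 ≤ C.deg L) :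
    ∃ E, C.Eff E ∧ E ≠ 0 ∧ C.linEquiv L (C.K + E) ∧
      C.IsMinimalPresentation L 0 E := by
  -- Construct E from L - K
  have hdegLK : (C.g : ℤ) ≤ C.deg (L - C.K) := by
    rw [C.deg_sub', C.deg_K]; linarith
  have hg2 : (2 : ℤ) ≤ (C.g : ℤ) := by exact_mod_cast hg
  have hrr := C.riemannRoch (L - C.K)
  change _ = C.deg (L - C.K) + 1 - _ at hrr
  have hh0 : 1 ≤ C.h0 (L - C.K) := by
    by_contra h
    push_neg at h
    interval_cases h' : C.h0 (L - C.K)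
    · simp [h'] at hrr
      have : (0 : ℤ) ≤ (C.h0 (C.K - (L - C.K)) : ℤ) := by positivity
      linarith
  obtain ⟨E, hEeff, hElin⟩ := C.exists_effective _ hh0
  have hdegE : C.deg E = C.deg L - (2 * (C.g : ℤ) - 2) := by
    have := C.linEquiv_deg hElin
    rw [C.deg_sub', C.deg_K] at this
    linarith
  have hEne : E ≠ 0 := by
    intro h
    rw [h, C.deg_zero'] at hdegE
    linarith
  have hLlin : C.linEquiv L (C.K + E) := by
    have h1 := C.linEquiv_add C.K hElin
    have e1 : L - C.K + C.K = L := by abel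
    have e2 : E + C.K = C.K + E := by abel
    rw [e1, e2] at h1
    exact h1
  refine ⟨E, hEeff, hEne, hLlin, ?_, ?_⟩
  · refine ⟨fun p => le_refl 0, hEeff, hEne, ?_, C.h0_zero, ?_⟩
    · ext p
      simp only [AbstractCurve.gcdD, Finsupp.zipWith_apply, Finsupp.coe_zero, Pi.zero_apply]
      exact min_eq_left (hEeff p)
    · have : C.K - 0 + E = C.K + E := by abel
      rw [this]; exact hLlin
  · rintro D' E' ⟨hD'eff, hE'eff, -, -, -, hlin'⟩
    have hdeg' := C.linEquiv_deg hlin'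
    rw [C.deg_add', C.deg_sub', C.deg_K] at hdeg'
    have hD'nonneg := C.eff_deg_nonneg hD'eff
    rw [hdegE]
    linarith
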